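/- arXiv:2003.00438 — 7 statements merged into one kernel-verified Lean document; each statement's English description precedes it below -/
import Mathlib

section
/- For any two points a, b in the Euclidean plane ℝ² (with the Euclidean norm), the integral over p from -π to π of the absolute value of the inner product ⟨b - a, (cos p, sin p)⟩ equals 4 times the distance from a to b. Equivalently, the length of the segment from a to b equals (1/4) ∫_{-π}^{π} A(p) dp, where A(p) is the length of the orthogonal projection of the segment onto the line of direction p. -/
open Real RealInnerProductSpace intervalIntegral

/-! Writing `b - a = r (cos θ, sin θ)` with `r = ‖b - a‖`, the integrand is `r |cos (p - θ)|`, and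
`|cos|` integrates to `4` over any interval of length `2π`. -/

theorem abs_cos_periodic : Function.Periodic (fun p => |cos p|) π := fun p => by
  simp [cos_add_pi]

theorem integral_abs_cos_add_two_pi (t : ℝ) : ∫ p in t..t + 2 * π, |cos p| = 4 := by
  have hint : ∀ u v, IntervalIntegrable (fun p => |cos p|) MeasureTheory.volume u v :=
    fun u v => continuous_cos.abs.intervalIntegrable u v
  have hhalf : ∫ p in -(π / 2)..-(π / 2) + π, |cos p| = 2 := by
    rw [show -(π / 2) + π = π / 2 by ring, integral_congr (g := cos) fun p hp => abs_of_nonneg <| cos_nonneg_of_mem_Icc <| by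
      rwa [Set.uIcc_of_le (by linarith [pi_pos])] at hp]
    simp only [integral_cos, sin_neg, sin_pi_div_two]
    ring
  calc ∫ p in t..t + 2 * π, |cos p|
      = (2 : ℤ) • ∫ p in t..t + π, |cos p| := by
        rw [← abs_cos_periodic.intervalIntegral_add_zsmul_eq 2 t hint, two_zsmul, two_mul]
    _ = 4 := by
        rw [abs_cos_periodic.intervalIntegral_add_eq t (-(π / 2)), hhalf]
        norm_num

theorem integral_abs_mul_cos_add_mul_sin (x y t : ℝ) :
    ∫ p in t..t + 2 * π, |x * cos p + y * sin p| = 4 * √(x ^ 2 + y ^ 2) := by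
  set z : ℂ := ⟨x, y⟩
  have hpolar (p : ℝ) : x * cos p + y * sin p = ‖z‖ * cos (p - z.arg) := by
    rw [cos_sub]
    linear_combination -cos p * Complex.norm_mul_cos_arg z - sin p * Complex.norm_mul_sin_arg z
  simp_rw [hpolar, abs_mul, abs_norm, integral_const_mul]
  rw [integral_comp_sub_right (fun p => |cos p|), add_sub_right_comm,
    integral_abs_cos_add_two_pi, Complex.norm_eq_sqrt_sq_add_sq]
  ring

theorem EuclideanSpace.inner_toLp_fin_two (v : EuclideanSpace ℝ (Fin 2)) (c s : ℝ) :
    ⟪v, (WithLp.toLp 2 ![c, s] : EuclideanSpace ℝ (Fin 2))⟫ = v 0 * c + v 1 * s := by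
  simp [PiLp.inner_apply, Fin.sum_univ_two, mul_comm]

theorem EuclideanSpace.norm_fin_two (v : EuclideanSpace ℝ (Fin 2)) :
    ‖v‖ = √(v 0 ^ 2 + v 1 ^ 2) := by
  simp [EuclideanSpace.norm_eq, Fin.sum_univ_two]

theorem cauchy_crofton_segment (a b : EuclideanSpace ℝ (Fin 2)) :
    (∫ p in (-Real.pi)..Real.pi,
        |⟪b - a, (WithLp.toLp 2 ![Real.cos p, Real.sin p] : EuclideanSpace ℝ (Fin 2))⟫|)
      = 4 * dist a b := by
  simp_rw [EuclideanSpace.inner_toLp_fin_two, dist_comm a, dist_eq_norm,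
    EuclideanSpace.norm_fin_two]
  simpa [show -π + 2 * π = π by ring] using
    integral_abs_mul_cos_add_mul_sin ((b - a) 0) ((b - a) 1) (-π)
end

section
/- For every natural number n ≥ 1 and every real θ, there exists a real δ with |δ| ≤ π/(2n) such that the sum over k from 0 to n-1 of |cos(θ + kπ/n)| equals cos(δ) / sin(π/(2n)). -/
/-!
As `|cos|` is `π`-periodic, the sum is `π/n`-periodic in `θ`, so `θ` may be moved into
`[-π/2, -π/2 + π/n)`. There all `n` angles `θ + kπ/n` lie in `[-π/2, π/2]`, the absolute values
drop, and the sum of cosines in arithmetic progression telescopes once multiplied by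
`2 sin(π/(2n))`.
-/

open Real Finset

theorem Function.Periodic.sum_range_comp_add_nsmul {α M : Type*} [AddCommMonoid α]
    [AddCancelCommMonoid M] {f : α → M} {c : α} {n : ℕ} (hf : Function.Periodic f (n • c)) :
    Function.Periodic (fun x => ∑ k ∈ range n, f (x + k • c)) c := by
  intro x
  apply add_right_cancel (b := f x)
  calc ∑ k ∈ range n, f (x + c + k • c) + f x
      = ∑ k ∈ range (n + 1), f (x + k • c) := by
        simp only [sum_range_succ', succ_nsmul', add_assoc, zero_smul, add_zero]
    _ = ∑ k ∈ range n, f (x + k • c) + f x := by rw [sum_range_succ, hf x]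

theorem Real.two_mul_sin_mul_sum_range_cos (x d : ℝ) (n : ℕ) :
    2 * sin (d / 2) * ∑ k ∈ range n, cos (x + k * d) =
      sin (x + n * d - d / 2) - sin (x - d / 2) := by
  induction n with
  | zero => simp
  | succ n ih =>
    have step : 2 * sin (d / 2) * cos (x + n * d)
        = sin (x + (n + 1) * d - d / 2) - sin (x + n * d - d / 2) := by
      rw [two_mul_sin_mul_cos, ← neg_sub, sin_neg]
      ring_nf
    rw [sum_range_succ, mul_add, ih, step]
    push_cast
    ring

theorem Real.sin_mul_sum_range_cos_add_mul_pi_div (x : ℝ) {n : ℕ} (hn : n ≠ 0) :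
    sin (π / (2 * n)) * ∑ k ∈ range n, cos (x + k * π / n) = sin (π / (2 * n) - x) := by
  have hhalf : π / n / 2 = π / (2 * n) := by rw [div_div, mul_comm]
  have hturn : x + n * (π / n) - π / (2 * n) = π - (π / (2 * n) - x) := by
    field_simp
    ring
  have h := two_mul_sin_mul_sum_range_cos x (π / n) n
  rw [hhalf, hturn, sin_pi_sub, ← neg_sub (π / (2 * n)), sin_neg] at h
  simp only [mul_div_assoc]
  linarith

theorem Real.cos_add_mul_pi_div_nonneg {x : ℝ} {n k : ℕ} (hk : k < n)
    (hx : x ∈ Set.Ico (-(π / 2)) (-(π / 2) + π / n)) : 0 ≤ cos (x + k * π / n) := by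
  have hk' : (k : ℝ) + 1 ≤ n := by exact_mod_cast hk
  have hstep : 0 ≤ π / n := by positivity
  have hlast : (k + 1) * (π / n) ≤ π :=
    calc (k + 1) * (π / n) ≤ n * (π / n) := by gcongr
      _ = π := mul_div_cancel₀ π (Nat.cast_ne_zero.mpr (Nat.ne_zero_of_lt hk))
  rw [mul_div_assoc]
  apply cos_nonneg_of_mem_Icc
  constructor <;> nlinarith [hx.1, hx.2]

theorem sum_abs_cos_equally_spaced (n : ℕ) (hn : 1 ≤ n) (θ : ℝ) :
    ∃ δ : ℝ, |δ| ≤ Real.pi / (2 * n) ∧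
      (∑ k ∈ Finset.range n, |Real.cos (θ + k * Real.pi / n)|)
        = Real.cos δ / Real.sin (Real.pi / (2 * n)) := by
  have hn₀ : n ≠ 0 := Nat.one_le_iff_ne_zero.mp hn
  have hstep : 0 < π / n := by positivity
  have hhalf : π / n = 2 * (π / (2 * n)) := by field_simp
  have hperiodic :
      Function.Periodic (fun x => ∑ k ∈ range n, |cos (x + k * π / n)|) (π / n) := by
    have habs : Function.Periodic (fun x => |cos x|) (n • (π / n)) := fun x => by
      simp only [nsmul_eq_mul, mul_div_cancel₀ π (Nat.cast_ne_zero.mpr hn₀), cos_add_pi, abs_neg]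
    simpa only [nsmul_eq_mul, mul_div_assoc] using habs.sum_range_comp_add_nsmul
  obtain ⟨φ, hφ, hθφ⟩ := hperiodic.exists_mem_Ico hstep θ (-(π / 2))
  have hsin : 0 < sin (π / (2 * n)) := by
    have : π / n ≤ π := div_le_self pi_pos.le (by exact_mod_cast hn)
    exact sin_pos_of_pos_of_lt_pi (by positivity) (by linarith [pi_pos])
  refine ⟨φ + π / 2 - π / (2 * n), abs_le.mpr ⟨by linarith [hφ.1], by linarith [hφ.2]⟩, ?_⟩
  calc ∑ k ∈ range n, |cos (θ + k * π / n)|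
      = ∑ k ∈ range n, |cos (φ + k * π / n)| := hθφ
    _ = ∑ k ∈ range n, cos (φ + k * π / n) :=
        sum_congr rfl fun k hk => abs_of_nonneg (cos_add_mul_pi_div_nonneg (mem_range.mp hk) hφ)
    _ = sin (π / (2 * n) - φ) / sin (π / (2 * n)) := by
        rw [eq_div_iff hsin.ne', mul_comm, sin_mul_sum_range_cos_add_mul_pi_div φ hn₀]
    _ = cos (φ + π / 2 - π / (2 * n)) / sin (π / (2 * n)) := by
        rw [← cos_pi_div_two_sub]
        ring_nf
end

section
/- Let a ∈ ℝ and ε > 0, and let F : ℝ → ℝ be continuous on the closed interval [a - ε, a + ε]. Then the limit, as α tends to 0 from the right, of (1/2) ∫_{a-ε}^{a+ε} F(μ) · α / (α² + (μ - a)²) dμ equals (π/2) · F(a). -/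
/-!
Up to the factor `π`, the kernel `α / (α ^ 2 + (μ - a) ^ 2)` is the Cauchy density of scale `α`
centred at `a`. Its integral over `[a - ε, a + ε]` is `(2 / π) arctan (ε / α) → 1`, and it tends to
`0` uniformly off any neighbourhood of `a`, so it is a family of peak functions and
`∫ F · kernel → F a` for `F` continuous on the interval.
-/

open Real Filter MeasureTheory Set Topology ProbabilityTheory
open scoped NNReal

lemma intervalIntegral_cauchyPDFReal (x₀ : ℝ) {γ : ℝ≥0} (hγ : γ ≠ 0) (a b : ℝ) :
    ∫ x in a..b, cauchyPDFReal x₀ γ x =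
      π⁻¹ * (arctan ((b - x₀) / γ) - arctan ((a - x₀) / γ)) := by
  have hγ' : (γ : ℝ) ≠ 0 := NNReal.coe_ne_zero.2 hγ
  simp only [cauchyPDFReal_def', NNReal.coe_inv, intervalIntegral.integral_const_mul,
    intervalIntegral.integral_comp_sub_right (fun y => (1 + (y / γ) ^ 2)⁻¹),
    intervalIntegral.integral_comp_div (fun y => (1 + y ^ 2)⁻¹) hγ', integral_inv_one_add_sq,
    smul_eq_mul]
  field

lemma cauchyPDFReal_le_of_le_abs_sub (x₀ : ℝ) (γ : ℝ≥0) {r x : ℝ} (hr : 0 < r)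
    (hx : r ≤ |x - x₀|) : cauchyPDFReal x₀ γ x ≤ γ / (π * r ^ 2) := by
  rw [cauchyPDFReal_def, div_eq_mul_inv, mul_inv, ← mul_assoc, mul_comm (π⁻¹)]
  gcongr
  calc r ^ 2 ≤ (x - x₀) ^ 2 := by simpa only [sq_abs] using pow_le_pow_left₀ hr.le hx 2
    _ ≤ (x - x₀) ^ 2 + γ ^ 2 := le_add_of_nonneg_right (sq_nonneg _)

lemma tendstoUniformlyOn_cauchyPDFReal_compl_nhds {x₀ : ℝ} {u : Set ℝ} (hu : u ∈ 𝓝 x₀) :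
    TendstoUniformlyOn (fun α : ℝ => cauchyPDFReal x₀ α.toNNReal) 0 (𝓝[>] 0) uᶜ := by
  obtain ⟨r, hr, hball⟩ := Metric.mem_nhds_iff.1 hu
  rw [Metric.tendstoUniformlyOn_iff]
  intro δ hδ
  filter_upwards [Ioo_mem_nhdsGT (show 0 < δ * (π * r ^ 2) by positivity)] with α hα x hx
  have hrx : r ≤ |x - x₀| := by
    by_contra! h
    exact hx (hball (by rwa [Metric.mem_ball, Real.dist_eq]))
  rw [Pi.zero_apply, dist_zero_left,
    Real.norm_of_nonneg (cauchyPDF_pos x₀ (by simpa using hα.1) x).le]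
  calc cauchyPDFReal x₀ α.toNNReal x ≤ α / (π * r ^ 2) := by
        simpa [Real.coe_toNNReal α hα.1.le] using
          cauchyPDFReal_le_of_le_abs_sub x₀ α.toNNReal hr hrx
    _ < δ := (div_lt_iff₀ (by positivity)).2 hα.2

lemma tendsto_integral_cauchyPDFReal_Icc {x₀ a b : ℝ} (hx₀ : x₀ ∈ Ioo a b) :
    Tendsto (fun α : ℝ => ∫ x in Icc a b, cauchyPDFReal x₀ α.toNNReal x) (𝓝[>] 0) (𝓝 1) := by
  have hinv : Tendsto (fun α : ℝ => α⁻¹) (𝓝[>] 0) atTop := tendsto_inv_nhdsGT_zero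
  have hb : Tendsto (fun α : ℝ => arctan ((b - x₀) / α)) (𝓝[>] 0) (𝓝 (π / 2)) :=
    (tendsto_nhds_of_tendsto_nhdsWithin tendsto_arctan_atTop).comp
      (hinv.const_mul_atTop (sub_pos.2 hx₀.2))
  have ha : Tendsto (fun α : ℝ => arctan ((a - x₀) / α)) (𝓝[>] 0) (𝓝 (-(π / 2))) :=
    (tendsto_nhds_of_tendsto_nhdsWithin tendsto_arctan_atBot).comp
      (hinv.const_mul_atTop_of_neg (sub_neg.2 hx₀.1))
  have hlim := (hb.sub ha).const_mul π⁻¹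
  rw [show π⁻¹ * (π / 2 - -(π / 2)) = 1 by field] at hlim
  refine hlim.congr' ?_
  filter_upwards [self_mem_nhdsWithin] with α (hα : 0 < α)
  rw [integral_Icc_eq_integral_Ioc, ← intervalIntegral.integral_of_le (hx₀.1.trans hx₀.2).le,
    intervalIntegral_cauchyPDFReal x₀ (by simpa using hα), Real.coe_toNNReal α hα.le]

theorem tendsto_setIntegral_cauchyPDFReal_smul {E : Type*} [NormedAddCommGroup E]
    [NormedSpace ℝ E] [CompleteSpace E] {x₀ a b : ℝ} (hx₀ : x₀ ∈ Ioo a b) {F : ℝ → E}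
    (hF : ContinuousOn F (Icc a b)) :
    Tendsto (fun α : ℝ => ∫ x in Icc a b, cauchyPDFReal x₀ α.toNNReal x • F x) (𝓝[>] 0)
      (𝓝 (F x₀)) :=
  tendsto_setIntegral_peak_smul_of_integrableOn_of_tendsto measurableSet_Icc measurableSet_Icc
    subset_rfl self_mem_nhdsWithin measure_Icc_lt_top.ne
    (Eventually.of_forall fun α x _ => by rw [cauchyPDFReal_def]; positivity)
    (fun u hu hx₀u => (tendstoUniformlyOn_cauchyPDFReal_compl_nhds (hu.mem_nhds hx₀u)).mono
      (sdiff_subset_compl _ _))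
    (tendsto_integral_cauchyPDFReal_Icc hx₀)
    (Eventually.of_forall fun α => (stronglyMeasurable_cauchyPDFReal x₀ _).aestronglyMeasurable)
    hF.integrableOn_Icc (hF.continuousWithinAt (Ioo_subset_Icc_self hx₀))

theorem cauchy_delta_function (a ε : ℝ) (hε : 0 < ε) (F : ℝ → ℝ)
    (hF : ContinuousOn F (Set.Icc (a - ε) (a + ε))) :
    Tendsto
      (fun α : ℝ =>
        (1 / 2) * ∫ μ in (a - ε)..(a + ε), F μ * α / (α ^ 2 + (μ - a) ^ 2))
      (nhdsWithin 0 (Set.Ioi 0)) (nhds (Real.pi / 2 * F a)) := by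
  have ha : a ∈ Ioo (a - ε) (a + ε) := ⟨by linarith, by linarith⟩
  refine ((tendsto_setIntegral_cauchyPDFReal_smul ha hF).const_mul (π / 2)).congr' ?_
  filter_upwards [self_mem_nhdsWithin] with α (hα : 0 < α)
  have hkernel : ∀ μ,
      F μ * α / (α ^ 2 + (μ - a) ^ 2) = π * (cauchyPDFReal a α.toNNReal μ • F μ) := by
    intro μ
    rw [smul_eq_mul, cauchyPDFReal_def, Real.coe_toNNReal α hα.le]
    field
  simp_rw [hkernel, intervalIntegral.integral_const_mul,
    intervalIntegral.integral_of_le (ha.1.trans ha.2).le, ← integral_Icc_eq_integral_Ioc]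
  ring
end

section
/- Let γ : ℝ → ℝ² (Euclidean plane) be twice continuously differentiable with ‖γ'(s)‖ = 1 for all s (arc-length parametrization), and fix s₀ ∈ ℝ. Then the quantity dist(γ(s₀ + i), γ(s₀) + i·γ'(s₀)) / i², i.e., the distance between the point reached by moving arc length i along the curve and the point reached by moving length i along the tangent line at γ(s₀), divided by i², tends to ‖γ''(s₀)‖ / 2 as i tends to 0 through nonzero values. -/
open Real Filter

/-! By Taylor's formula with Peano remainder,
`γ (s₀ + i) = γ s₀ + i • γ' s₀ + (i ^ 2 / 2) • γ'' s₀ + o(i ^ 2)`, so the gap between the curve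
and its tangent, divided by `i ^ 2`, tends to the vector `γ'' s₀ / 2`, and its norm to
`‖γ'' s₀‖ / 2`. -/

open Asymptotics Topology

section

variable {E : Type*} [NormedAddCommGroup E] [NormedSpace ℝ E]

theorem ContDiff.isLittleO_taylor_two {f : ℝ → E} (hf : ContDiff ℝ 2 f) (x₀ : ℝ) :
    (fun h : ℝ => f (x₀ + h) - (f x₀ + h • deriv f x₀ + (h ^ 2 / 2) • deriv (deriv f) x₀))
      =o[𝓝 0] fun h => h ^ 2 := by
  have hshift : Tendsto (fun h : ℝ => x₀ + h) (𝓝 0) (𝓝 x₀) := by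
    simpa using (continuous_const_add x₀).tendsto 0
  have htaylor := (taylor_isLittleO_univ (n := 2) (x₀ := x₀) (by exact_mod_cast hf)).comp_tendsto
    hshift
  convert htaylor using 2 with h
  · simp [taylorWithinEval_succ, iteratedDerivWithin_univ, iteratedDeriv_succ, div_eq_inv_mul]
    norm_num
  · simp

theorem tendsto_norm_div_of_isLittleO_sub_smul {α : Type*} {l : Filter α} {r : α → E}
    {g : α → ℝ} {c : E} (hg : ∀ᶠ x in l, 0 < g x) (hr : (fun x => r x - g x • c) =o[l] g) :
    Tendsto (fun x => ‖r x‖ / g x) l (𝓝 ‖c‖) := by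
  have hquot : Tendsto (fun x => (g x)⁻¹ • r x) l (𝓝 c) := by
    have h := (hr.tendsto_inv_smul_nhds_zero).add_const c
    rw [zero_add] at h
    refine h.congr' ?_
    filter_upwards [hg] with x hx
    rw [smul_sub, inv_smul_smul₀ hx.ne', sub_add_cancel]
  refine hquot.norm.congr' ?_
  filter_upwards [hg] with x hx
  rw [norm_smul, norm_inv, norm_of_nonneg hx.le, inv_mul_eq_div]

end

theorem cauchy_curve_tangent_distance_general (γ : ℝ → EuclideanSpace ℝ (Fin 2))
    (hγ : ContDiff ℝ 2 γ) (s₀ : ℝ) :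
    Tendsto (fun i : ℝ => dist (γ (s₀ + i)) (γ s₀ + i • deriv γ s₀) / i ^ 2)
      (nhdsWithin 0 {0}ᶜ) (nhds (‖deriv (deriv γ) s₀‖ / 2)) := by
  have hnorm : ‖deriv (deriv γ) s₀‖ / 2 = ‖(1 / 2 : ℝ) • deriv (deriv γ) s₀‖ := by
    rw [norm_smul]; norm_num; ring
  rw [hnorm]
  simp only [dist_eq_norm]
  refine tendsto_norm_div_of_isLittleO_sub_smul ?_ ?_
  · filter_upwards [self_mem_nhdsWithin] with i (hi : i ≠ 0)
    positivity
  · refine ((hγ.isLittleO_taylor_two s₀).mono nhdsWithin_le_nhds).congr_left fun i => ?_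
    rw [smul_smul, div_eq_mul_one_div, mul_comm]
    abel

theorem cauchy_curve_tangent_distance (γ : ℝ → EuclideanSpace ℝ (Fin 2))
    (hγ : ContDiff ℝ 2 γ) (hunit : ∀ s : ℝ, ‖deriv γ s‖ = 1) (s₀ : ℝ) :
    Tendsto (fun i : ℝ => dist (γ (s₀ + i)) (γ s₀ + i • deriv γ s₀) / i ^ 2)
      (nhdsWithin 0 {0}ᶜ) (nhds (‖deriv (deriv γ) s₀‖ / 2)) :=
  cauchy_curve_tangent_distance_general γ hγ s₀
end

section
/- Let γ : ℝ → ℝ² (Euclidean plane) be twice continuously differentiable with ‖γ'(s)‖ = 1 for all s, fix s₀ ∈ ℝ with γ''(s₀) ≠ 0, and let c = γ(s₀) + (1/‖γ''(s₀)‖²)·γ''(s₀) be the center of curvature at γ(s₀). Suppose p is a function assigning to each sufficiently small nonzero i a point p(i) ∈ ℝ² lying on both the normal line to γ at s₀ and the normal line to γ at s₀ + i, i.e., ⟨p(i) − γ(s₀), γ'(s₀)⟩ = 0 and ⟨p(i) − γ(s₀ + i), γ'(s₀ + i)⟩ = 0 for all i ≠ 0 in some punctured neighborhood of 0. Then p(i)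 tends to c as i tends to 0 through nonzero values. -/
open Real Filter RealInnerProductSpace

/-!
Since `‖γ'‖ = 1`, `γ''(s₀)` is orthogonal to `γ'(s₀)`, so in the plane the normal at `s₀` is the
line `γ(s₀) + ℝ • γ''(s₀)`. Intersecting it with the normal at `s₀ + i` gives the parameter
`⟪γ(s₀ + i) - γ(s₀), γ'(s₀ + i)⟫ / ⟪γ''(s₀), γ'(s₀ + i)⟫`, whose numerator and denominator vanish
at `i = 0` with derivatives `1` and `‖γ''(s₀)‖²`; hence it tends to `1 / ‖γ''(s₀)‖²`.
-/

open Topology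

/-- L'Hôpital's rule in pointwise form: `f x / g x` is the quotient of the slopes at `a`. -/
theorem HasDerivAt.tendsto_div_of_eq_zero {f g : ℝ → ℝ} {f' g' a : ℝ}
    (hf : HasDerivAt f f' a) (hg : HasDerivAt g g' a) (hfa : f a = 0) (hga : g a = 0)
    (hg' : g' ≠ 0) : Tendsto (fun x => f x / g x) (𝓝[≠] a) (𝓝 (f' / g')) := by
  refine ((hasDerivAt_iff_tendsto_slope.mp hf).div
    (hasDerivAt_iff_tendsto_slope.mp hg) hg').congr' ?_
  filter_upwards [self_mem_nhdsWithin] with x hx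
  rw [Pi.div_apply, slope_def_field, slope_def_field, hfa, hga, sub_zero, sub_zero,
    div_div_div_cancel_right₀ (sub_ne_zero.mpr hx)]

theorem HasDerivAt.comp_const_add_zero {𝕜 F : Type*} [NontriviallyNormedField 𝕜]
    [NormedAddCommGroup F] [NormedSpace 𝕜 F] {f : 𝕜 → F} {f' : F} {a : 𝕜}
    (hf : HasDerivAt f f' a) : HasDerivAt (fun x => f (a + x)) f' 0 :=
  HasDerivAt.comp_const_add a 0 (by rwa [add_zero])

section InnerProductSpace

variable {F : Type*} [NormedAddCommGroup F] [InnerProductSpace ℝ F]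

theorem HasDerivAt.inner_eq_zero_of_norm_eq_const {f : ℝ → F} {f' : F} {s r : ℝ}
    (hf : HasDerivAt f f' s) (hnorm : ∀ t, ‖f t‖ = r) : ⟪f', f s⟫ = 0 := by
  have hconst : (fun t => ⟪f t, f t⟫) = fun _ => r ^ 2 := by
    funext t
    rw [real_inner_self_eq_norm_sq, hnorm]
  have hderiv := hf.inner ℝ hf
  rw [hconst] at hderiv
  linarith [hderiv.unique (hasDerivAt_const s (r ^ 2)), real_inner_comm f' (f s)]

variable {γ : ℝ → F} {s₀ : ℝ}

theorem hasDerivAt_inner_chord_deriv (hγ : DifferentiableAt ℝ γ s₀)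
    (hγ' : DifferentiableAt ℝ (deriv γ) s₀) (hunit : ‖deriv γ s₀‖ = 1) :
    HasDerivAt (fun i => ⟪γ (s₀ + i) - γ s₀, deriv γ (s₀ + i)⟫) 1 0 := by
  have hchord : HasDerivAt (fun i => γ (s₀ + i) - γ s₀) (deriv γ s₀) 0 :=
    hγ.hasDerivAt.comp_const_add_zero.sub_const (γ s₀)
  have htangent : HasDerivAt (fun i => deriv γ (s₀ + i)) (deriv (deriv γ) s₀) 0 :=
    hγ'.hasDerivAt.comp_const_add_zero
  refine (hchord.inner ℝ htangent).congr_deriv ?_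
  simp [hunit]

end InnerProductSpace

section Plane

variable {E : Type*} [NormedAddCommGroup E] [InnerProductSpace ℝ E]
  (hE : Module.finrank ℝ E = 2)
include hE

theorem exists_smul_eq_of_inner_eq_zero {T w v : E} (hT : T ≠ 0) (hw : w ≠ 0)
    (hwT : ⟪w, T⟫ = 0) (hvT : ⟪v, T⟫ = 0) : ∃ c : ℝ, c • w = v := by
  have : Fact (Module.finrank ℝ E = 1 + 1) := ⟨hE⟩
  have : FiniteDimensional ℝ E := Module.finite_of_finrank_eq_succ hE
  have hspan : (ℝ ∙ w) = (ℝ ∙ T)ᗮ := by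
    apply Submodule.eq_of_le_of_finrank_eq
    · exact (Submodule.span_singleton_le_iff_mem w _).mpr
        (Submodule.mem_orthogonal_singleton_iff_inner_left.mpr hwT)
    · rw [finrank_span_singleton hw, Submodule.finrank_orthogonal_span_singleton (n := 1) hT]
  exact Submodule.mem_span_singleton.mp
    (hspan ▸ Submodule.mem_orthogonal_singleton_iff_inner_left.mpr hvT)

/-- The normal line `{q | ⟪q - x, T⟫ = 0}` is `x + ℝ • w`; the second normal line through `y`
fixes the parameter. -/
theorem eq_add_smul_of_mem_normals {x y T T' w q : E} (hT : T ≠ 0) (hwT : ⟪w, T⟫ = 0)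
    (hwT' : ⟪w, T'⟫ ≠ 0) (hq : ⟪q - x, T⟫ = 0) (hq' : ⟪q - y, T'⟫ = 0) :
    q = x + (⟪y - x, T'⟫ / ⟪w, T'⟫) • w := by
  have hw : w ≠ 0 := by rintro rfl; simp at hwT'
  obtain ⟨c, hc⟩ := exists_smul_eq_of_inner_eq_zero hE hT hw hwT hq
  have hqy : q - y = c • w - (y - x) := by rw [hc]; abel
  rw [hqy, inner_sub_left, real_inner_smul_left, sub_eq_zero] at hq'
  rw [← hq', mul_div_cancel_right₀ c hwT', hc]
  abel

end Plane

theorem cauchy_center_of_curvature (γ : ℝ → EuclideanSpace ℝ (Fin 2))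
    (hγ : ContDiff ℝ 2 γ) (hunit : ∀ s : ℝ, ‖deriv γ s‖ = 1) (s₀ : ℝ)
    (hcurv : deriv (deriv γ) s₀ ≠ 0)
    (p : ℝ → EuclideanSpace ℝ (Fin 2))
    (hp : ∀ᶠ i in nhdsWithin (0 : ℝ) {0}ᶜ,
      ⟪p i - γ s₀, deriv γ s₀⟫ = 0 ∧ ⟪p i - γ (s₀ + i), deriv γ (s₀ + i)⟫ = 0) :
    Tendsto p (nhdsWithin (0 : ℝ) {0}ᶜ)
      (nhds (γ s₀ + (1 / ‖deriv (deriv γ) s₀‖ ^ 2) • deriv (deriv γ) s₀)) := by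
  set w := deriv (deriv γ) s₀
  have hγ₁ : DifferentiableAt ℝ γ s₀ := (hγ.differentiable two_ne_zero).differentiableAt
  have hγ₂ : DifferentiableAt ℝ (deriv γ) s₀ :=
    ((contDiff_succ_iff_deriv (n := 1)).mp hγ).2.2.differentiable one_ne_zero |>.differentiableAt
  have hwT : ⟪w, deriv γ s₀⟫ = 0 := hγ₂.hasDerivAt.inner_eq_zero_of_norm_eq_const hunit
  have hT : deriv γ s₀ ≠ 0 := norm_ne_zero_iff.mp (by simp [hunit])
  have hκ : ‖w‖ ^ 2 ≠ 0 := pow_ne_zero 2 (norm_ne_zero_iff.mpr hcurv)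
  have hden : HasDerivAt (fun i => ⟪w, deriv γ (s₀ + i)⟫) (‖w‖ ^ 2) 0 := by
    refine ((hasDerivAt_const 0 w).inner ℝ hγ₂.hasDerivAt.comp_const_add_zero).congr_deriv ?_
    rw [inner_zero_left, add_zero, real_inner_self_eq_norm_sq]
  have hratio := (hasDerivAt_inner_chord_deriv hγ₁ hγ₂ (hunit s₀)).tendsto_div_of_eq_zero hden
    (by simp) (by simpa using hwT) hκ
  refine (tendsto_const_nhds.add (hratio.smul_const w)).congr' ?_
  filter_upwards [hp, hden.eventually_ne (c := 0) hκ] with i ⟨hnormal₀, hnormal⟩ hi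
  exact (eq_add_smul_of_mem_normals finrank_euclideanSpace_fin hT hwT hi hnormal₀ hnormal).symm
end

section
/- Let f : ℝ → ℝ, x₀ ∈ ℝ, and L ∈ ℝ. Then f has derivative L at x₀ if and only if for every nonzero infinitesimal hyperreal ε, the hyperreal (f*(x₀ + ε) − f(x₀)) / ε is infinitely close to L (i.e., its standard part is L), where f* denotes the natural extension of f to the hyperreals. -/
/-!
The derivative is the limit of the slope `slope f x₀` along `𝓝[≠] x₀`. Since this filter is
countably generated, a failure of that limit is witnessed by a single sequence, and along the
hyperfilter (which refines `atTop`) that sequence still witnesses it. Along the hyperfilter, a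
sequence tends to `𝓝[≠] x` exactly when its germ is infinitely close to `x` but distinct from it,
and the slope of the natural extension at such a germ is Cauchy's ratio of increments.
-/

open Hyperreal

/-- The natural extension of a real function to the hyperreals, obtained by
applying the function termwise to representing sequences (the germ map). -/
noncomputable def Hyperreal.extend (f : ℝ → ℝ) : ℝ* → ℝ* :=
  Filter.Germ.map f

open Filter Topology

set_option linter.deprecated false

theorem Filter.tendsto_iff_forall_tendsto_hyperfilter {α β : Type*} {f : α → β} {k : Filter α}
    {l : Filter β} [k.IsCountablyGenerated] :
    Tendsto f k l ↔
      ∀ a : ℕ → α, Tendsto a (hyperfilter ℕ) k → Tendsto (f ∘ a) (hyperfilter ℕ) l := by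
  refine ⟨fun h a ha => h.comp ha, fun h => ?_⟩
  by_contra hf
  obtain ⟨s, hs, hfreq⟩ := not_tendsto_iff_exists_frequently_notMem.1 hf
  have := frequently_iff_neBot.1 hfreq
  obtain ⟨a, ha⟩ := exists_seq_tendsto (k ⊓ 𝓟 {x | f x ∉ s})
  obtain ⟨hak, has⟩ := tendsto_inf.1 (ha.mono_left Nat.hyperfilter_le_atTop)
  obtain ⟨n, hin, hout⟩ := ((h a hak).eventually hs |>.and (tendsto_principal.1 has)).exists
  exact hout hin

theorem Filter.Germ.coe_ne_coe_iff {α β : Type*} {φ : Ultrafilter α} {f g : α → β} :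
    (f : (φ : Filter α).Germ β) ≠ g ↔ ∀ᶠ n in φ, f n ≠ g n := by
  rw [Ne, Germ.coe_eq]
  exact Ultrafilter.eventually_not.symm

theorem Hyperreal.isSt_ofSeq_and_ne_iff {a : ℕ → ℝ} {x : ℝ} :
    IsSt (ofSeq a) x ∧ ofSeq a ≠ x ↔ Tendsto a (hyperfilter ℕ) (𝓝[≠] x) := by
  rw [tendsto_nhdsWithin_iff, isSt_ofSeq_iff_tendsto]
  exact Iff.rfl.and Germ.coe_ne_coe_iff

theorem Hyperreal.tendsto_nhdsNE_iff_forall_isSt {g : ℝ → ℝ} {x L : ℝ} :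
    Tendsto g (𝓝[≠] x) (𝓝 L) ↔ ∀ y : ℝ*, IsSt y x → y ≠ x → IsSt (extend g y) L := by
  rw [tendsto_iff_forall_tendsto_hyperfilter, ofSeq_surjective.forall]
  refine forall_congr' fun a => ?_
  rw [← isSt_ofSeq_and_ne_iff, and_imp]
  exact imp_congr_right fun _ => imp_congr_right fun _ => isSt_ofSeq_iff_tendsto.symm

theorem Hyperreal.forall_isSt_ne_iff_forall_infinitesimal {x : ℝ} {P : ℝ* → Prop} :
    (∀ y : ℝ*, IsSt y x → y ≠ x → P y) ↔ ∀ η : ℝ*, Infinitesimal η → η ≠ 0 → P (x + η) := by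
  refine ⟨fun h η hη hne => h _ ?_ (by simpa using hne), fun h y hy hne => ?_⟩
  · simpa using (isSt_refl_real x).add hη
  · simpa using h (y - x) hy.infinitesimal_sub (sub_ne_zero.2 hne)

theorem Hyperreal.extend_slope (f : ℝ → ℝ) (x : ℝ) (η : ℝ*) :
    extend (slope f x) (x + η) = (extend f (x + η) - f x) / η := by
  obtain ⟨a, rfl⟩ := ofSeq_surjective η
  show ofSeq _ = ofSeq _
  congr 1
  funext n
  simp [slope, div_eq_inv_mul]

theorem hasDerivAt_iff_isSt_ratio (f : ℝ → ℝ) (x₀ L : ℝ) :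
    HasDerivAt f L x₀ ↔
      ∀ η : ℝ*, Infinitesimal η → η ≠ 0 →
        IsSt ((Hyperreal.extend f ((x₀ : ℝ*) + η) - (f x₀ : ℝ*)) / η) L := by
  simp only [hasDerivAt_iff_tendsto_slope, tendsto_nhdsNE_iff_forall_isSt,
    forall_isSt_ne_iff_forall_infinitesimal, extend_slope]
end

section
/- Let f : ℝ → ℝ and L ∈ ℝ. Then f(s) tends to L as s tends to 0 through nonzero values if and only if for every nonzero infinitesimal hyperreal ε, the hyperreal f*(ε) is infinitely close to L (i.e., its standard part is L), where f* denotes the natural extension of f to the hyperreals. -/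
/-!
Every hyperreal is the germ of a real sequence along the hyperfilter, and a nonzero infinitesimal
is the germ of a sequence tending to `0` through nonzero values along it. So the right-hand side is
the sequential criterion for the limit, with convergence of sequences taken along the hyperfilter
instead of `atTop`. That criterion still characterizes limits along the countably generated filter
`𝓝[≠] 0`: if `f` fails to tend to `L`, some sequence tending to `0` through nonzero values has
`f` outside a fixed neighbourhood of `L` at every index, so it fails along any nontrivial filter.
-/

open Hyperreal Filter Topology

theorem Filter.tendsto_iff_seq_tendsto_of_le_atTop {α β : Type*} {f : α → β} {k : Filter α}
    {l : Filter β} [k.IsCountablyGenerated] {φ : Filter ℕ} [φ.NeBot] (hφ : φ ≤ atTop) :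
    Tendsto f k l ↔ ∀ x : ℕ → α, Tendsto x φ k → Tendsto (f ∘ x) φ l := by
  refine ⟨fun hf x hx ↦ hf.comp hx, fun H ↦ ?_⟩
  by_contra hf
  obtain ⟨s, hs, hfreq⟩ := not_tendsto_iff_exists_frequently_notMem.1 hf
  have : (k ⊓ 𝓟 {a | f a ∉ s}).NeBot := frequently_iff_neBot.1 hfreq
  obtain ⟨x, hx⟩ := exists_seq_tendsto (k ⊓ 𝓟 {a | f a ∉ s})
  rw [tendsto_inf, tendsto_principal] at hx
  have hxs : ∀ᶠ n in φ, f (x n) ∈ s := H x (hx.1.mono_left hφ) hs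
  exact ((hx.2.filter_mono hφ).and hxs).exists.elim fun _ hn ↦ hn.1 hn.2

namespace Hyperreal

theorem extend_ofSeq (f : ℝ → ℝ) (g : ℕ → ℝ) : extend f (ofSeq g) = ofSeq (f ∘ g) := rfl

theorem ofSeq_ne_zero_iff {g : ℕ → ℝ} : ofSeq g ≠ 0 ↔ ∀ᶠ n in hyperfilter ℕ, g n ≠ 0 := by
  simp only [Ne, Ultrafilter.eventually_not, not_iff_not]
  exact Germ.coe_eq

theorem ofSeq_tendsto_punctured_nhds_zero_iff {g : ℕ → ℝ} :
    Tendsto g (hyperfilter ℕ) (𝓝[≠] 0) ↔ Infinitesimal (ofSeq g) ∧ ofSeq g ≠ 0 := by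
  rw [tendsto_nhdsWithin_iff, Infinitesimal, isSt_ofSeq_iff_tendsto, ofSeq_ne_zero_iff]
  rfl

end Hyperreal

theorem tendsto_iff_isSt_extend (f : ℝ → ℝ) (L : ℝ) :
    Tendsto f (nhdsWithin (0 : ℝ) {0}ᶜ) (nhds L) ↔
      ∀ η : ℝ*, Infinitesimal η → η ≠ 0 → IsSt (Hyperreal.extend f η) L := by
  rw [tendsto_iff_seq_tendsto_of_le_atTop Nat.hyperfilter_le_atTop, ofSeq_surjective.forall]
  refine forall_congr' fun g ↦ ?_
  rw [ofSeq_tendsto_punctured_nhds_zero_iff, extend_ofSeq, isSt_ofSeq_iff_tendsto, and_imp]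
end
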